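/- Let G be the flower graph obtained by identifying root vertices y_1,...,y_r of connected graphs K_1,...,K_r (with weight functions β_1,...,β_r) with a single vertex x carrying weight α(x). Then M_G^γ = Σ_{i=1}^r M_{K_i}^{β_i} + Σ_{i=1}^r M_{K_i}^{η_i}(y_i), where η_i = (Σ_{j≠i}|V_j| − r + 1)·β_i + α(x) + Σ_{j≠i} B_j and B_j = Σ_{v∈V_j} β_j(v). -/

import Mathlib

/-!
Every vertex of `G` other than the centre `c` is the image of exactly one non-root vertex of
one petal `K i`, while `c` is the image of all `r` roots. Hence
`∑_w F w = ∑_i ∑_{v ∈ V_i} F (iK i v) - (r - 1) F c`, and `γ` is the pushforward of the `β i`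
plus `α(x)` at `c`. Distances inside a petal are those of `K i` and distances between petals
pass through `c`, so the moment of `G` at a vertex of `K i` is its moment in `K i`, plus
`α(x) + ∑_{j ≠ i} B_j` times its distance to the root, plus `∑_{j ≠ i} M_{K_j}^{β_j}(y_j)`.
Summing over `v ∈ V_i` turns the last term into `|V_i| ∑_{j ≠ i} M_{K_j}^{β_j}(y_j)`;
exchanging `i` and `j` gives the coefficient `∑_{j ≠ i} |V_j|` of `β_i` in `η_i`, and the
correction `-(r - 1) M_G^γ(c)` gives its `- r + 1`.
-/

open Finset

namespace SimpleGraph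

noncomputable def moment {V : Type*} [Fintype V] (G : SimpleGraph V) (ρ : V → ℝ) (u : V) : ℝ :=
  ∑ v, ρ v * (G.dist u v : ℝ)

end SimpleGraph

section Wedge

variable {ι VG : Type*} {VK : ι → Type*} [Fintype ι] [∀ i, Fintype (VK i)]
  {iK : ∀ i, VK i → VG} {y : ∀ i, VK i} {c : VG}

section FiberSum

variable [DecidableEq VG]

variable (iK) in
def fiberSum (φ : ∀ i, VK i → ℝ) (w : VG) : ℝ :=
  ∑ i, ∑ v, if iK i v = w then φ i v else 0

theorem sum_sum_mul_comp_eq_sum_fiberSum_mul [Fintype VG] (φ : ∀ i, VK i → ℝ) (g : VG → ℝ) :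
    ∑ i, ∑ v, φ i v * g (iK i v) = ∑ w, fiberSum iK φ w * g w := by
  simp only [fiberSum, sum_mul, ite_mul, zero_mul]
  rw [sum_comm]
  refine sum_congr rfl fun i _ => ?_
  rw [sum_comm]
  exact sum_congr rfl fun v _ => by simp

theorem fiberSum_center (hiK : ∀ i, Function.Injective (iK i)) (hc : ∀ i, iK i (y i) = c)
    (φ : ∀ i, VK i → ℝ) : fiberSum iK φ c = ∑ i, φ i (y i) := by
  classical
  refine sum_congr rfl fun i _ => ?_
  simp [← hc i, (hiK i).eq_iff]

theorem fiberSum_apply_of_ne_root (hiK : ∀ i, Function.Injective (iK i))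
    (hdisj : ∀ i j v v', i ≠ j → iK i v = iK j v' → v = y i ∧ v' = y j)
    (φ : ∀ i, VK i → ℝ) {i : ι} {v : VK i} (hv : v ≠ y i) :
    fiberSum iK φ (iK i v) = φ i v := by
  classical
  rw [fiberSum, sum_eq_single i]
  · simp [(hiK i).eq_iff]
  · intro j _ hji
    refine sum_eq_zero fun v' _ => if_neg fun h => hv (hdisj j i v' v hji h).2
  · simp

end FiberSum

variable (iK y c) in
structure IsWedge : Prop where
  injective : ∀ i, Function.Injective (iK i)
  apply_root : ∀ i, iK i (y i) = c
  exists_eq_apply : ∀ w : VG, ∃ i v, w = iK i v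
  eq_root_of_apply_eq : ∀ i j v v', i ≠ j → iK i v = iK j v' → v = y i ∧ v' = y j

theorem IsWedge.sum_mul_eq_add_sum_sum [Fintype VG] (hW : IsWedge iK y c) {α : ℝ}
    {β : ∀ i, VK i → ℝ} {γ : VG → ℝ} (hγc : γ c = α + ∑ i, β i (y i))
    (hγ : ∀ i v, v ≠ y i → γ (iK i v) = β i v) (g : VG → ℝ) :
    ∑ w, γ w * g w = α * g c + ∑ i, ∑ v, β i v * g (iK i v) := by
  classical
  have hγ_eq : ∀ w, γ w = (if w = c then α else 0) + fiberSum iK β w := by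
    intro w
    split_ifs with hw
    · rw [hw, hγc, fiberSum_center hW.injective hW.apply_root]
    · obtain ⟨i, v, rfl⟩ := hW.exists_eq_apply w
      have hv : v ≠ y i := fun h => hw (h ▸ hW.apply_root i)
      rw [zero_add, hγ i v hv, fiberSum_apply_of_ne_root hW.injective hW.eq_root_of_apply_eq _ hv]
  simp only [hγ_eq, add_mul, ite_mul, zero_mul, sum_add_distrib, sum_ite_eq',
    mem_univ, if_true, sum_sum_mul_comp_eq_sum_fiberSum_mul]

theorem IsWedge.sum_eq_sum_sum_sub [Fintype VG] (hW : IsWedge iK y c) (F : VG → ℝ) :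
    ∑ w, F w = ∑ i, ∑ v, F (iK i v) - (Fintype.card ι - 1) * F c := by
  have := hW.sum_mul_eq_add_sum_sum (α := 1 - Fintype.card ι)
    (β := fun _ _ => 1) (γ := fun _ => 1) (by simp) (fun _ _ _ => rfl) F
  simp only [one_mul] at this
  rw [this]
  ring

end Wedge

theorem sum_mul_sum_erase_sub_mul_sum {ι : Type*} [Fintype ι] [DecidableEq ι] (n E : ι → ℝ) :
    ∑ i, n i * ∑ j ∈ univ.erase i, E j - (Fintype.card ι - 1) * ∑ i, E i
      = ∑ i, ((∑ j ∈ univ.erase i, n j) - Fintype.card ι + 1) * E i := by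
  simp only [sum_erase_eq_sub (mem_univ _), mul_sub, sub_mul, add_mul, sum_sub_distrib,
    sum_add_distrib, ← mul_sum, ← sum_mul]
  ring

section Flower

variable {ι VG : Type*} {VK : ι → Type*} [Fintype ι] [Fintype VG] [∀ i, Fintype (VK i)]
  {K : ∀ i, SimpleGraph (VK i)} {G : SimpleGraph VG}
  {y : ∀ i, VK i} {iK : ∀ i, VK i → VG} {c : VG} {α : ℝ} {β : ∀ i, VK i → ℝ} {γ : VG → ℝ}

theorem IsWedge.moment_center (hW : IsWedge iK y c)
    (hdK : ∀ i v v', G.dist (iK i v) (iK i v') = (K i).dist v v')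
    (hγc : γ c = α + ∑ i, β i (y i)) (hγ : ∀ i v, v ≠ y i → γ (iK i v) = β i v) :
    G.moment γ c = ∑ i, (K i).moment (β i) (y i) := by
  rw [SimpleGraph.moment, hW.sum_mul_eq_add_sum_sum hγc hγ]
  simp only [SimpleGraph.dist_self, CharP.cast_eq_zero, mul_zero, zero_add, SimpleGraph.moment]
  refine sum_congr rfl fun i _ => ?_
  simp only [← hW.apply_root i, hdK]

theorem IsWedge.moment_apply [DecidableEq ι] (hW : IsWedge iK y c)
    (hdK : ∀ i v v', G.dist (iK i v) (iK i v') = (K i).dist v v')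
    (hcross : ∀ i j v v', i ≠ j →
      G.dist (iK i v) (iK j v') = (K i).dist v (y i) + (K j).dist (y j) v')
    (hγc : γ c = α + ∑ i, β i (y i)) (hγ : ∀ i v, v ≠ y i → γ (iK i v) = β i v)
    (i : ι) (v : VK i) :
    G.moment γ (iK i v) = α * (K i).dist v (y i) + (K i).moment (β i) v
      + ∑ j ∈ univ.erase i, ((∑ v', β j v') * (K i).dist v (y i) + (K j).moment (β j) (y j)) := by
  rw [SimpleGraph.moment, hW.sum_mul_eq_add_sum_sum hγc hγ,
    ← add_sum_erase _ _ (mem_univ i), ← hW.apply_root i, hdK, add_assoc]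
  congr 2
  · simp only [hdK, SimpleGraph.moment]
  · refine sum_congr rfl fun j hj => ?_
    simp only [hcross i j v _ (ne_of_mem_erase hj).symm, SimpleGraph.moment, Nat.cast_add, mul_add,
      sum_add_distrib, sum_mul]

end Flower

theorem flower_moment_general {r : ℕ}
    {VG : Type*} {VK : Fin r → Type*} [Fintype VG] [∀ i, Fintype (VK i)]
    (K : ∀ i, SimpleGraph (VK i)) (G : SimpleGraph VG)
    (y : ∀ i, VK i) (iK : ∀ i, VK i → VG)
    (hiK : ∀ i, Function.Injective (iK i))
    (hroot : ∀ i j, iK i (y i) = iK j (y j))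
    (hcover : ∀ w : VG, ∃ i v, w = iK i v)
    (hdisj : ∀ i j v v', i ≠ j → iK i v = iK j v' → v = y i ∧ v' = y j)
    (hdK : ∀ i v v', G.dist (iK i v) (iK i v') = (K i).dist v v')
    (hcross : ∀ i j v v', i ≠ j →
      G.dist (iK i v) (iK j v') = (K i).dist v (y i) + (K j).dist (y j) v')
    (αx : ℝ) (β : ∀ i, VK i → ℝ)
    (γ : VG → ℝ)
    (hγK : ∀ i v, v ≠ y i → γ (iK i v) = β i v)
    (hγc : ∀ i, γ (iK i (y i)) = αx + ∑ j, β j (y j)) :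
    ∑ w : VG, ∑ w' : VG, γ w' * (G.dist w w' : ℝ) =
      (∑ i, ∑ v : VK i, ∑ v' : VK i, β i v' * ((K i).dist v v' : ℝ))
      + ∑ i, ∑ v : VK i,
          (((∑ j ∈ Finset.univ.erase i, (Fintype.card (VK j) : ℝ)) - r + 1) * β i v
            + αx + ∑ j ∈ Finset.univ.erase i, ∑ v' : VK j, β j v')
            * ((K i).dist v (y i) : ℝ) := by
  rcases isEmpty_or_nonempty (Fin r) with hr | ⟨⟨i₀⟩⟩
  · have : IsEmpty VG := ⟨fun w => (hcover w).elim fun i _ => hr.elim i⟩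
    simp
  have hW : IsWedge iK y (iK i₀ (y i₀)) := ⟨hiK, fun i => hroot i i₀, hcover, hdisj⟩
  have hE : ∀ i, (K i).moment (β i) (y i) = ∑ v, β i v * (K i).dist v (y i) := fun i =>
    sum_congr rfl fun v _ => by rw [SimpleGraph.dist_comm]
  change ∑ w, G.moment γ w = _
  rw [hW.sum_eq_sum_sum_sub, hW.moment_center hdK (hγc i₀) hγK]
  simp only [hW.moment_apply hdK hcross (hγc i₀) hγK]
  calc _ = ∑ i, ∑ v, (K i).moment (β i) v
        + ∑ i, ∑ v, (αx + ∑ j ∈ univ.erase i, ∑ v', β j v') * (K i).dist v (y i)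
        + (∑ i, (Fintype.card (VK i) : ℝ) * ∑ j ∈ univ.erase i, (K j).moment (β j) (y j)
          - (Fintype.card (Fin r) - 1) * ∑ i, (K i).moment (β i) (y i)) := by
        simp only [sum_add_distrib, add_mul, sum_mul, sum_const, card_univ, nsmul_eq_mul]
        ring
    _ = _ := by
      rw [sum_mul_sum_erase_sub_mul_sum]
      simp only [hE]
      simp only [Fintype.card_fin, add_mul, sub_mul, mul_sum, sum_add_distrib, sum_sub_distrib,
        mul_assoc, SimpleGraph.moment]
      ring

/-- Moment of the flower graph obtained by identifying the roots `y₁,…,y_r` of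
`K₁,…,K_r` with a single vertex `x` of weight `α(x)`:
`M_G^γ = Σ_i M_{K_i}^{β_i} + Σ_i M_{K_i}^{η_i}(y_i)`, where
`η_i = (Σ_{j≠i}|V_j| − r + 1)·β_i + α(x) + Σ_{j≠i} B_j`. -/
theorem flower_moment {r : ℕ}
    {VG : Type*} {VK : Fin r → Type*} [Fintype VG] [∀ i, Fintype (VK i)]
    (K : ∀ i, SimpleGraph (VK i)) (G : SimpleGraph VG)
    (hK : ∀ i, (K i).Connected)
    (y : ∀ i, VK i) (iK : ∀ i, VK i → VG)
    (hiK : ∀ i, Function.Injective (iK i))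
    (hroot : ∀ i j, iK i (y i) = iK j (y j))
    (hcover : ∀ w : VG, ∃ i v, w = iK i v)
    (hdisj : ∀ i j v v', i ≠ j → iK i v = iK j v' → v = y i ∧ v' = y j)
    (hdK : ∀ i v v', G.dist (iK i v) (iK i v') = (K i).dist v v')
    (hcross : ∀ i j v v', i ≠ j →
      G.dist (iK i v) (iK j v') = (K i).dist v (y i) + (K j).dist (y j) v')
    (αx : ℝ) (hαx : 0 ≤ αx) (β : ∀ i, VK i → ℝ) (hβ : ∀ i v, 0 ≤ β i v)
    (γ : VG → ℝ)
    (hγK : ∀ i v, v ≠ y i → γ (iK i v) = β i v)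
    (hγc : ∀ i, γ (iK i (y i)) = αx + ∑ j, β j (y j)) :
    ∑ w : VG, ∑ w' : VG, γ w' * (G.dist w w' : ℝ) =
      (∑ i, ∑ v : VK i, ∑ v' : VK i, β i v' * ((K i).dist v v' : ℝ))
      + ∑ i, ∑ v : VK i,
          (((∑ j ∈ Finset.univ.erase i, (Fintype.card (VK j) : ℝ)) - r + 1) * β i v
            + αx + ∑ j ∈ Finset.univ.erase i, ∑ v' : VK j, β j v')
            * ((K i).dist v (y i) : ℝ) :=
  flower_moment_general K G y iK hiK hroot hcover hdisj hdK hcross αx β γ hγK hγc
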